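/- arXiv:2304.02599 — 6 statements merged into one kernel-verified Lean document; each statement's English description precedes it below -/
import Mathlib

section
/- For every integer N ≥ 1 and every binary string b ∈ {0,1}^N, the function Ṽ_b : ℝ² → ℝ is convex, nonnegative, Lipschitz continuous with Lipschitz constant at most 2^{7N+1}, and attains its minimum value Ṽ_b(0,0) = 0 at the origin. -/
open scoped BigOperators

/-- `[b]_k = ∑_{i=1}^k b_i 2^{-(i+2)}` (bits are zero-indexed in `b`). -/
noncomputable def bitsVal (b : ℕ → Bool) (k : ℕ) : ℝ :=
  ∑ i ∈ Finset.range k, (if b i then (1 : ℝ) else 0) * (2 : ℝ) ^ (-((i : ℤ) + 3))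

/-- `φ_{k,b}(x,y) = max(0, |y − [b]_k x| − (2^{-k} x + 2^{-(3N−k)}))`. -/
noncomputable def phi (N : ℕ) (b : ℕ → Bool) (k : ℕ) (x y : ℝ) : ℝ :=
  max 0 (|y - bitsVal b k * x| - ((2 : ℝ) ^ (-(k : ℤ)) * x + (2 : ℝ) ^ (-(3 * (N : ℤ) - k))))

/-- `max_{k=1,…,j} 2^{-k} φ_{k,b}(x,y)`. -/
noncomputable def maxPhi (N : ℕ) (b : ℕ → Bool) (j : ℕ) (x y : ℝ) : ℝ :=
  ⨆ k : Finset.Icc 1 j, (2 : ℝ) ^ (-((k : ℕ) : ℤ)) * phi N b (k : ℕ) x y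

/-- The potential `Ṽ_b = 2^{7N} max_{k=1,…,N} 2^{-k} φ_{k,b}`. -/
noncomputable def Vt (N : ℕ) (b : ℕ → Bool) (x y : ℝ) : ℝ :=
  2 ^ (7 * N) * maxPhi N b N x y

lemma bitsVal_nonneg (b : ℕ → Bool) (k : ℕ) : 0 ≤ bitsVal b k := by
  apply Finset.sum_nonneg
  intro i _
  positivity

lemma bitsVal_le (b : ℕ → Bool) (k : ℕ) : bitsVal b k ≤ 1 / 4 := by
  have h1 : bitsVal b k ≤ ∑ i ∈ Finset.range k, (2 : ℝ) ^ (-((i : ℤ) + 3)) := by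
    apply Finset.sum_le_sum
    intro i _
    have : (0:ℝ) < (2 : ℝ) ^ (-((i : ℤ) + 3)) := by positivity
    split_ifs <;> nlinarith
  have h2 : ∀ i : ℕ, (2 : ℝ) ^ (-((i : ℤ) + 3)) = (1/8 : ℝ) * (1/2 : ℝ) ^ i := by
    intro i
    rw [zpow_neg]
    have : ((i : ℤ) + 3) = ((i + 3 : ℕ) : ℤ) := by push_cast; ring
    rw [this, zpow_natCast]
    rw [pow_add]
    field_simp
    rw [mul_right_comm, ← mul_pow]; norm_num
  have h3 : ∑ i ∈ Finset.range k, (2 : ℝ) ^ (-((i : ℤ) + 3))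
      = (1/8 : ℝ) * ∑ i ∈ Finset.range k, (1/2 : ℝ) ^ i := by
    rw [Finset.mul_sum]
    exact Finset.sum_congr rfl fun i _ => h2 i
  have h4 := sum_geometric_two_le k
  have : ∑ i ∈ Finset.range k, (1/2 : ℝ) ^ i ≤ 2 := by
    simpa using h4
  calc bitsVal b k ≤ (1/8 : ℝ) * ∑ i ∈ Finset.range k, (1/2 : ℝ) ^ i := by
        rw [← h3]; exact h1
    _ ≤ (1/8 : ℝ) * 2 := by nlinarith [Finset.sum_nonneg (fun i (_ : i ∈ Finset.range k) => by positivity : ∀ i ∈ Finset.range k, (0:ℝ) ≤ (1/2:ℝ)^i)]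
    _ ≤ 1/4 := by norm_num

lemma phi_nonneg (N : ℕ) (b : ℕ → Bool) (k : ℕ) (x y : ℝ) : 0 ≤ phi N b k x y :=
  le_max_left _ _

lemma maxPhi_eq_sup' (N : ℕ) (hN : 1 ≤ N) (b : ℕ → Bool) (x y : ℝ) :
    maxPhi N b N x y = (Finset.Icc 1 N).sup' ⟨1, by simp [hN]⟩
      (fun k => (2 : ℝ) ^ (-(k : ℤ)) * phi N b k x y) := by
  have h1 : (1 : ℕ) ∈ Finset.Icc 1 N := by simp [hN]
  haveI : Nonempty ↥(Finset.Icc 1 N) := ⟨⟨1, h1⟩⟩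
  unfold maxPhi
  apply le_antisymm
  · apply ciSup_le
    rintro ⟨k, hk⟩
    exact Finset.le_sup' (fun j : ℕ => (2 : ℝ) ^ (-(j : ℤ)) * phi N b j x y) hk
  · apply Finset.sup'_le
    intro k hk
    exact le_ciSup (f := fun k : ↥(Finset.Icc 1 N) => (2 : ℝ) ^ (-((k : ℕ) : ℤ)) * phi N b (k : ℕ) x y) (Set.Finite.bddAbove (Set.finite_range _)) (⟨k, hk⟩ : ↥(Finset.Icc 1 N))

lemma inner_convex (m a d : ℝ) :
    ConvexOn ℝ Set.univ
      (fun p : EuclideanSpace ℝ (Fin 2) => |p 1 - m * p 0| - (a * p 0 + d)) := by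
  constructor
  · exact convex_univ
  · intro p _ q _ s t hs ht hst
    have hp0 : (s • p + t • q) 0 = s * p 0 + t * q 0 := rfl
    have hp1 : (s • p + t • q) 1 = s * p 1 + t * q 1 := rfl
    simp only [hp0, hp1, smul_eq_mul]
    have habs : |s * p 1 + t * q 1 - m * (s * p 0 + t * q 0)|
        ≤ s * |p 1 - m * p 0| + t * |q 1 - m * q 0| := by
      have : s * p 1 + t * q 1 - m * (s * p 0 + t * q 0)
          = s * (p 1 - m * p 0) + t * (q 1 - m * q 0) := by ring
      rw [this]
      calc |s * (p 1 - m * p 0) + t * (q 1 - m * q 0)|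
          ≤ |s * (p 1 - m * p 0)| + |t * (q 1 - m * q 0)| := abs_add_le _ _
        _ = s * |p 1 - m * p 0| + t * |q 1 - m * q 0| := by
            rw [abs_mul, abs_mul, abs_of_nonneg hs, abs_of_nonneg ht]
    have hd : d = s * d + t * d := by rw [← add_mul, hst, one_mul]
    nlinarith [habs]

lemma term_convex (N : ℕ) (b : ℕ → Bool) (k : ℕ) (c : ℝ) (hc : 0 ≤ c) :
    ConvexOn ℝ Set.univ
      (fun p : EuclideanSpace ℝ (Fin 2) => c * phi N b k (p 0) (p 1)) := by
  have h1 : ConvexOn ℝ Set.univ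
      (fun p : EuclideanSpace ℝ (Fin 2) => phi N b k (p 0) (p 1)) := by
    have h0 : ConvexOn ℝ (Set.univ : Set (EuclideanSpace ℝ (Fin 2))) (fun _ => (0:ℝ)) :=
      convexOn_const 0 convex_univ
    have h2 := inner_convex (bitsVal b k) ((2 : ℝ) ^ (-(k : ℤ)))
      ((2 : ℝ) ^ (-(3 * (N : ℤ) - k)))
    have := h0.sup h2
    simpa [phi, Pi.sup_def, max_comm] using this
  have := h1.smul hc
  simpa [smul_eq_mul] using this

lemma abs_coord_le (p q : EuclideanSpace ℝ (Fin 2)) (i : Fin 2) :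
    |p i - q i| ≤ dist p q := by
  have := EuclideanSpace.dist_eq p q
  rw [this]
  have h1 : |p i - q i| = Real.sqrt ((dist (p i) (q i))^2) := by
    rw [Real.sqrt_sq dist_nonneg, Real.dist_eq]
  rw [h1]
  apply Real.sqrt_le_sqrt
  exact Finset.single_le_sum (f := fun j => dist (p j) (q j) ^ 2) (fun j _ => sq_nonneg _) (Finset.mem_univ i)

lemma term_lipschitz (N : ℕ) (b : ℕ → Bool) (k : ℕ) (c : ℝ) (hc : 0 ≤ c) :
    LipschitzWith (Real.toNNReal (3 * c))
      (fun p : EuclideanSpace ℝ (Fin 2) => c * phi N b k (p 0) (p 1)) := by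
  apply LipschitzWith.of_dist_le_mul
  intro p q
  rw [Real.dist_eq, Real.coe_toNNReal _ (by positivity)]
  set m := bitsVal b k with hm
  set a := (2 : ℝ) ^ (-(k : ℤ)) with ha
  set d := (2 : ℝ) ^ (-(3 * (N : ℤ) - k)) with hd
  have hm0 : 0 ≤ m := bitsVal_nonneg b k
  have hm1 : m ≤ 1/4 := bitsVal_le b k
  have ha0 : 0 ≤ a := by positivity
  have ha1 : a ≤ 1 := by
    rw [ha, zpow_neg]
    have h1 : (1:ℝ) ≤ (2:ℝ) ^ (k : ℤ) := one_le_zpow₀ (by norm_num) (by positivity)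
    have h2 : (0:ℝ) < (2:ℝ) ^ (k : ℤ) := by positivity
    rw [inv_le_one_iff₀]
    right; exact h1
  have h0 : |p 0 - q 0| ≤ dist p q := abs_coord_le p q 0
  have h1 : |p 1 - q 1| ≤ dist p q := abs_coord_le p q 1
  have hAB : |(|p 1 - m * p 0| - (a * p 0 + d)) - (|q 1 - m * q 0| - (a * q 0 + d))|
      ≤ 3 * dist p q := by
    have e1 : |(|p 1 - m * p 0|) - (|q 1 - m * q 0|)| ≤ |(p 1 - q 1) - m * (p 0 - q 0)| := by
      have h := abs_abs_sub_abs_le_abs_sub (p 1 - m * p 0) (q 1 - m * q 0)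
      have h2 : (p 1 - m * p 0) - (q 1 - m * q 0) = (p 1 - q 1) - m * (p 0 - q 0) := by ring
      rwa [h2] at h
    have e2 : |(p 1 - q 1) - m * (p 0 - q 0)| ≤ |p 1 - q 1| + m * |p 0 - q 0| := by
      calc |(p 1 - q 1) - m * (p 0 - q 0)| ≤ |p 1 - q 1| + |m * (p 0 - q 0)| := abs_sub _ _
        _ = |p 1 - q 1| + m * |p 0 - q 0| := by rw [abs_mul, abs_of_nonneg hm0]
    have e3 : |a * p 0 - a * q 0| = a * |p 0 - q 0| := by
      rw [← mul_sub, abs_mul, abs_of_nonneg ha0]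
    have key : (|p 1 - m * p 0| - (a * p 0 + d)) - (|q 1 - m * q 0| - (a * q 0 + d))
        = ((|p 1 - m * p 0|) - (|q 1 - m * q 0|)) - (a * p 0 - a * q 0) := by ring
    rw [key]
    have hdn : (0:ℝ) ≤ dist p q := dist_nonneg
    calc |((|p 1 - m * p 0|) - (|q 1 - m * q 0|)) - (a * p 0 - a * q 0)|
        ≤ |(|p 1 - m * p 0|) - (|q 1 - m * q 0|)| + |a * p 0 - a * q 0| := abs_sub _ _
      _ ≤ (|p 1 - q 1| + m * |p 0 - q 0|) + a * |p 0 - q 0| := by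
          rw [e3]; exact add_le_add (le_trans e1 e2) (le_refl _)
      _ ≤ 3 * dist p q := by nlinarith
  have hmax : |phi N b k (p 0) (p 1) - phi N b k (q 0) (q 1)|
      ≤ 3 * dist p q := by
    unfold phi
    rw [max_comm 0 _, max_comm 0 _]
    exact le_trans (abs_max_sub_max_le_abs _ _ _) hAB
  calc |c * phi N b k (p 0) (p 1) - c * phi N b k (q 0) (q 1)|
      = c * |phi N b k (p 0) (p 1) - phi N b k (q 0) (q 1)| := by
        rw [← mul_sub, abs_mul, abs_of_nonneg hc]
    _ ≤ c * (3 * dist p q) := by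
        apply mul_le_mul_of_nonneg_left hmax hc
    _ = 3 * c * dist p q := by ring

lemma lip_sup {K : NNReal} {f g : EuclideanSpace ℝ (Fin 2) → ℝ}
    (hf : LipschitzWith K f) (hg : LipschitzWith K g) : LipschitzWith K (f ⊔ g) := by
  have := hf.max hg
  simpa [Pi.sup_def, max_self] using this

lemma const_mul_sup' {s : Finset ℕ} (hs : s.Nonempty) (c : ℝ) (hc : 0 ≤ c) (f : ℕ → ℝ) :
    c * s.sup' hs f = s.sup' hs (fun k => c * f k) := by
  exact Finset.comp_sup'_eq_sup'_comp hs (fun x : ℝ => c * x)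
    (fun x y => by exact mul_max_of_nonneg x y hc)

lemma phi_zero (N : ℕ) (b : ℕ → Bool) (k : ℕ) : phi N b k 0 0 = 0 := by
  unfold phi
  apply max_eq_left
  have h : (0:ℝ) < (2 : ℝ) ^ (-(3 * (N : ℤ) - k)) := by positivity
  have h2 : |(0:ℝ) - bitsVal b k * 0| = 0 := by simp
  rw [h2]
  nlinarith

/-- For every `N ≥ 1` and binary string `b ∈ {0,1}^N`, the function `Ṽ_b`
is convex, nonnegative, Lipschitz with constant at most `2^{7N+1}` (w.r.t. the Euclidean
norm on `ℝ²`), and attains its minimum value `Ṽ_b(0,0) = 0` at the origin. -/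
theorem stmt_1 (N : ℕ) (hN : 1 ≤ N) (b : ℕ → Bool) :
    ConvexOn ℝ Set.univ (fun p : EuclideanSpace ℝ (Fin 2) => Vt N b (p 0) (p 1)) ∧
    (∀ x y : ℝ, 0 ≤ Vt N b x y) ∧
    LipschitzWith (2 ^ (7 * N + 1)) (fun p : EuclideanSpace ℝ (Fin 2) => Vt N b (p 0) (p 1)) ∧
    Vt N b 0 0 = 0 ∧ (∀ x y : ℝ, Vt N b 0 0 ≤ Vt N b x y) := by
  have h1 : (1 : ℕ) ∈ Finset.Icc 1 N := by simp [hN]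
  have hne : (Finset.Icc 1 N).Nonempty := ⟨1, h1⟩
  set G : ℕ → EuclideanSpace ℝ (Fin 2) → ℝ :=
    fun k p => (2 ^ (7 * N) * (2 : ℝ) ^ (-(k : ℤ))) * phi N b k (p 0) (p 1) with hG
  have hVt : ∀ x y : ℝ, Vt N b x y
      = (Finset.Icc 1 N).sup' hne (fun k => (2 ^ (7 * N) * (2 : ℝ) ^ (-(k : ℤ))) * phi N b k x y) := by
    intro x y
    rw [Vt, maxPhi_eq_sup' N hN b x y,
      const_mul_sup' hne (2 ^ (7 * N)) (by positivity)]
    congr 1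
    funext k
    ring
  have hkey : (fun p : EuclideanSpace ℝ (Fin 2) => Vt N b (p 0) (p 1))
      = (Finset.Icc 1 N).sup' hne G := by
    funext p
    rw [hVt (p 0) (p 1), Finset.sup'_apply]
  have hzero : Vt N b 0 0 = 0 := by
    rw [hVt 0 0]
    have : ∀ k ∈ Finset.Icc 1 N,
        (2 ^ (7 * N) * (2 : ℝ) ^ (-(k : ℤ))) * phi N b k 0 0 = 0 := by
      intro k _; rw [phi_zero]; ring
    rw [Finset.sup'_congr hne rfl this, Finset.sup'_const]
  have hnonneg : ∀ x y : ℝ, 0 ≤ Vt N b x y := by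
    intro x y
    rw [hVt x y]
    have : (0:ℝ) ≤ (2 ^ (7 * N) * (2 : ℝ) ^ (-(1 : ℕ) : ℤ)) * phi N b 1 x y := by
      have := phi_nonneg N b 1 x y; positivity
    calc (0:ℝ) ≤ _ := this
      _ ≤ _ := Finset.le_sup' (fun k : ℕ => (2 ^ (7 * N) * (2 : ℝ) ^ (-(k : ℤ))) * phi N b k x y) h1
  refine ⟨?_, hnonneg, ?_, hzero, ?_⟩
  · rw [hkey]
    apply Finset.sup'_induction hne G
    · intro f hf g hg; exact hf.sup hg
    · intro k _
      exact term_convex N b k _ (by positivity)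
  · rw [hkey]
    have hlip : ∀ k ∈ Finset.Icc 1 N, LipschitzWith (2 ^ (7 * N + 1)) (G k) := by
      intro k hk
      have hk1 : 1 ≤ k := (Finset.mem_Icc.mp hk).1
      have hterm := term_lipschitz N b k (2 ^ (7 * N) * (2 : ℝ) ^ (-(k : ℤ))) (by positivity)
      apply hterm.weaken
      rw [← NNReal.coe_le_coe, Real.coe_toNNReal _ (by positivity)]
      push_cast
      have hb : (2:ℝ) ^ (-(k : ℤ)) ≤ 2 ^ (-(1:ℤ)) := by
        apply zpow_le_zpow_right₀ (by norm_num)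
        omega
      have h2 : (2:ℝ) ^ (-(1:ℤ)) = 1/2 := by norm_num
      have hp : (0:ℝ) < 2 ^ (7 * N) := by positivity
      have : (2:ℝ) ^ (7 * N + 1) = 2 * 2 ^ (7 * N) := by ring
      rw [this]
      have hb' : (2:ℝ) ^ (-(k : ℤ)) ≤ 1/2 := hb.trans_eq h2
      nlinarith [hp, hb']
    apply Finset.sup'_induction hne G
    · intro f hf g hg; exact lip_sup hf hg
    · exact hlip
  · intro x y
    rw [hzero]; exact hnonneg x y
end

section
/- There exists an integer N₀ such that for all integers N ≥ N₀, all binary strings b ∈ {0,1}^N, and all (x,y) ∈ ℝ² whose Euclidean distance to the set Z̃_b is at most 10³ · 2^{-5N}, one has Ṽ_b(x,y) = 0. -/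
open scoped BigOperators

/-- The point `(x, y) ∈ ℝ²` (with the Euclidean norm). -/
noncomputable def pt (x y : ℝ) : EuclideanSpace ℝ (Fin 2) := WithLp.toLp 2 ![x, y]

/-- The sector `Z̃_b = {(x, βx) : x ≥ 0, [b]_N − 2^{-N} ≤ β ≤ [b]_N + 2^{-N}}`. -/
def Zsector (N : ℕ) (b : ℕ → Bool) : Set (EuclideanSpace ℝ (Fin 2)) :=
  {p | ∃ x β : ℝ, 0 ≤ x ∧ bitsVal b N - (2 : ℝ) ^ (-(N : ℤ)) ≤ β ∧
    β ≤ bitsVal b N + (2 : ℝ) ^ (-(N : ℤ)) ∧ p = pt x (β * x)}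

lemma bits_diff (b : ℕ → Bool) {k N : ℕ} (h : k ≤ N) :
    0 ≤ bitsVal b N - bitsVal b k ∧
    bitsVal b N - bitsVal b k ≤ (2:ℝ)^(-(k:ℤ)-2) - (2:ℝ)^(-(N:ℤ)-2) := by
  induction N, h using Nat.le_induction with
  | base => simp
  | succ n hn ih =>
    have hb : bitsVal b (n+1) = bitsVal b n + (if b n then (1:ℝ) else 0) * 2^(-((n:ℤ)+3)) := by
      simp [bitsVal, Finset.sum_range_succ]
    have h1 : (0:ℝ) ≤ (if b n then (1:ℝ) else 0) * 2^(-((n:ℤ)+3)) := by positivity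
    have h2 : (if b n then (1:ℝ) else 0) * 2^(-((n:ℤ)+3)) ≤ (2:ℝ)^(-((n:ℤ)+3)) := by
      split
      · simp
      · simp; positivity
    have h3 : (2:ℝ)^(-((n:ℤ)+1)-2) = (2:ℝ)^(-(n:ℤ)-2) - (2:ℝ)^(-((n:ℤ)+3)) := by
      have e1 : (2:ℝ)^(-(n:ℤ)-2) = 2 * (2:ℝ)^(-(n:ℤ)-3) := by
        rw [show (-(n:ℤ)-2) = 1 + (-(n:ℤ)-3) by ring, zpow_add₀ (two_ne_zero)]
        norm_num
      have e2 : (-((n:ℤ)+1)-2) = -(n:ℤ)-3 := by ring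
      have e3 : (-((n:ℤ)+3)) = -(n:ℤ)-3 := by ring
      rw [e2, e3, e1]; ring
    have hcast : (((n+1:ℕ)):ℤ) = (n:ℤ)+1 := by push_cast; ring
    rw [hcast]
    constructor <;> [linarith [ih.1]; linarith [ih.2]]

lemma coord_le (a b c d : ℝ) :
    |a - c| ≤ dist (pt a b) (pt c d) ∧ |b - d| ≤ dist (pt a b) (pt c d) := by
  have h := EuclideanSpace.dist_eq (pt a b) (pt c d)
  simp only [pt, WithLp.ofLp_toLp, Fin.sum_univ_two, Matrix.cons_val_zero, Matrix.cons_val_one,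
    Matrix.head_cons, Real.dist_eq, sq_abs] at h
  simp only [pt]
  constructor
  · rw [h, ← Real.sqrt_sq_eq_abs]
    exact Real.sqrt_le_sqrt (by nlinarith [sq_nonneg (b-d)])
  · rw [h, ← Real.sqrt_sq_eq_abs]
    exact Real.sqrt_le_sqrt (by nlinarith [sq_nonneg (a-c)])

/-- For all sufficiently large `N`, all `b ∈ {0,1}^N`, and all `(x,y) ∈ ℝ²`
whose Euclidean distance to `Z̃_b` is at most `10³ · 2^{-5N}`, one has `Ṽ_b(x,y) = 0`. -/
theorem stmt_2 :
    ∃ N₀ : ℕ, ∀ N : ℕ, N₀ ≤ N → ∀ b : ℕ → Bool, ∀ x y : ℝ,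
      Metric.infDist (pt x y) (Zsector N b) ≤ 10 ^ 3 * (2 : ℝ) ^ (-(5 * (N : ℤ))) →
      Vt N b x y = 0 := by
  use 6
  intro N hN b x y h
  have hN1 : (1:ℕ) ≤ N := by omega
  set δ : ℝ := 10 ^ 3 * (2 : ℝ) ^ (-(5 * (N : ℤ))) with hδdef
  have hδpos : 0 < δ := by positivity
  have hne : (Zsector N b).Nonempty := by
    refine ⟨pt 0 0, 0, bitsVal b N, le_rfl, ?_, ?_, by rw [mul_zero]⟩
    · have : (0:ℝ) ≤ (2:ℝ)^(-(N:ℤ)) := by positivity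
      linarith
    · have : (0:ℝ) ≤ (2:ℝ)^(-(N:ℤ)) := by positivity
      linarith
  have h2 : Metric.infDist (pt x y) (Zsector N b) < 2*δ := lt_of_le_of_lt h (by linarith)
  obtain ⟨z, hz, hdz⟩ := (Metric.infDist_lt_iff hne).mp h2
  obtain ⟨x₀, β, hx₀, hβ1, hβ2, rfl⟩ := hz
  have hx : |x - x₀| ≤ 2*δ := le_of_lt (lt_of_le_of_lt (coord_le x y x₀ (β*x₀)).1 hdz)
  have hy : |y - β*x₀| ≤ 2*δ := le_of_lt (lt_of_le_of_lt (coord_le x y x₀ (β*x₀)).2 hdz)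
  -- bitsVal bounds
  have hb0 : bitsVal b 0 = 0 := by simp [bitsVal]
  have key : ∀ k : ℕ, 1 ≤ k → k ≤ N →
      |y - bitsVal b k * x| - ((2:ℝ)^(-(k:ℤ)) * x + (2:ℝ)^(-(3*(N:ℤ)-k))) ≤ 0 := by
    intro k hk1 hkN
    have hd := bits_diff b hkN
    set s := (2:ℝ)^(-(k:ℤ)) with hs
    set t := (2:ℝ)^(-(N:ℤ)) with ht
    have hspos : 0 < s := by positivity
    have htpos : 0 < t := by positivity
    have hts : t ≤ s := by
      apply zpow_le_zpow_right₀ one_le_two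
      omega
    have hshalf : s ≤ 1/2 := by
      have : s ≤ (2:ℝ)^(-1:ℤ) := by
        apply zpow_le_zpow_right₀ one_le_two
        omega
      simpa using this
    have hs4 : (2:ℝ)^(-(k:ℤ)-2) = s/4 := by
      rw [hs, zpow_sub₀ (two_ne_zero)]; norm_num
    have ht4 : (2:ℝ)^(-(N:ℤ)-2) = t/4 := by
      rw [ht, zpow_sub₀ (two_ne_zero)]; norm_num
    rw [hs4, ht4] at hd
    -- |β - bitsVal b k| ≤ s
    have hβN : |β - bitsVal b N| ≤ t := by
      rw [abs_le]; constructor <;> linarith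
    have hβk : |β - bitsVal b k| ≤ s := by
      rw [abs_le] at hβN ⊢
      constructor <;> linarith [hd.1, hd.2]
    -- bitsVal b k ∈ [0, 1/4]
    have hbk := bits_diff b (Nat.zero_le k)
    rw [hb0, sub_zero] at hbk
    have hbk0 : 0 ≤ bitsVal b k := hbk.1
    have hbk4 : bitsVal b k ≤ 1/4 := by
      have := hbk.2
      have h02 : (2:ℝ)^(-((0:ℕ):ℤ)-2) = 1/4 := by norm_num
      have hkp : (0:ℝ) < (2:ℝ)^(-(k:ℤ)-2) := by positivity
      rw [h02] at this
      linarith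
    -- gap bound
    have hgap : (7/2)*δ ≤ (2:ℝ)^(-(3*(N:ℤ)-k)) := by
      have hpow : (3500:ℝ) ≤ (2:ℝ)^(2*(N:ℤ)+k) := by
        have h13 : ((2:ℝ))^((13):ℤ) ≤ (2:ℝ)^(2*(N:ℤ)+k) := by
          apply zpow_le_zpow_right₀ one_le_two
          omega
        have : ((2:ℝ))^((13):ℤ) = 8192 := by norm_num
        linarith
      have hrw : (2:ℝ)^(-(3*(N:ℤ)-k)) = (2:ℝ)^(2*(N:ℤ)+k) * (2:ℝ)^(-(5*(N:ℤ))) := by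
        rw [← zpow_add₀ (two_ne_zero : (2:ℝ) ≠ 0)]
        congr 1
        ring
      have hpos5 : (0:ℝ) ≤ (2:ℝ)^(-(5*(N:ℤ))) := by positivity
      calc (7/2)*δ = 3500 * (2:ℝ)^(-(5*(N:ℤ))) := by rw [hδdef]; ring
        _ ≤ (2:ℝ)^(2*(N:ℤ)+k) * (2:ℝ)^(-(5*(N:ℤ))) := mul_le_mul_of_nonneg_right hpow hpos5
        _ = (2:ℝ)^(-(3*(N:ℤ)-k)) := hrw.symm
    -- main chain
    have expand : y - bitsVal b k * x = (y - β*x₀) + (β - bitsVal b k)*x₀ + bitsVal b k * (x₀ - x) := by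
      ring
    have habs : |y - bitsVal b k * x| ≤ |y - β*x₀| + |β - bitsVal b k| * x₀ + bitsVal b k * |x₀ - x| := by
      rw [expand]
      calc |(y - β*x₀) + (β - bitsVal b k)*x₀ + bitsVal b k * (x₀ - x)|
          ≤ |(y - β*x₀) + (β - bitsVal b k)*x₀| + |bitsVal b k * (x₀ - x)| := abs_add_le _ _
        _ ≤ |y - β*x₀| + |(β - bitsVal b k)*x₀| + |bitsVal b k * (x₀ - x)| := by
            linarith [abs_add_le (y - β*x₀) ((β - bitsVal b k)*x₀)]
        _ = |y - β*x₀| + |β - bitsVal b k| * x₀ + bitsVal b k * |x₀ - x| := by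
            rw [abs_mul, abs_mul, abs_of_nonneg hx₀, abs_of_nonneg hbk0]
    have hxx : |x₀ - x| ≤ 2*δ := by rw [abs_sub_comm]; exact hx
    have hx₀le : x₀ ≤ x + 2*δ := by
      have := neg_abs_le (x - x₀)
      linarith
    have t1 : |β - bitsVal b k| * x₀ ≤ s * x₀ := mul_le_mul_of_nonneg_right hβk hx₀
    have t2 : s * x₀ ≤ s * (x + 2*δ) := mul_le_mul_of_nonneg_left hx₀le hspos.le
    have t3 : bitsVal b k * |x₀ - x| ≤ (1/4) * (2*δ) :=
      mul_le_mul hbk4 hxx (abs_nonneg _) (by norm_num)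
    nlinarith [hspos, hδpos]
  have hphi : ∀ k : ℕ, 1 ≤ k → k ≤ N → phi N b k x y = 0 := fun k h1 h2 =>
    max_eq_left (key k h1 h2)
  have hfun : (fun k : Finset.Icc 1 N => (2:ℝ)^(-(((k:ℕ)):ℤ)) * phi N b (k:ℕ) x y)
      = fun _ => (0:ℝ) := by
    funext k
    obtain ⟨k, hk⟩ := k
    rw [Finset.mem_Icc] at hk
    simp [hphi k hk.1 hk.2]
  haveI : Nonempty (Finset.Icc 1 N) := ⟨⟨1, Finset.mem_Icc.mpr ⟨le_rfl, hN1⟩⟩⟩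
  have hmax : maxPhi N b N x y = 0 := by
    rw [maxPhi, hfun]
    exact ciSup_const
  rw [Vt, hmax, mul_zero]
end

section
/- There exists an integer N₀ such that for all integers N ≥ N₀, all binary strings b ∈ {0,1}^N, and all (x,y) ∈ ℝ², one has Ṽ_b(x,y) ≥ 2^{4N} · max(0, dist((x,y), Z̃_b) − 1), where dist denotes Euclidean distance to the set Z̃_b. -/
open scoped BigOperators

lemma phi_ge (N : ℕ) (b : ℕ → Bool) (k : ℕ) (x y : ℝ) :
    |y - bitsVal b k * x| - ((2 : ℝ) ^ (-(k : ℤ)) * x + (2 : ℝ) ^ (-(3 * (N : ℤ) - k)))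
      ≤ phi N b k x y := le_max_right _ _

lemma maxPhi_ge (N : ℕ) (b : ℕ → Bool) (x y : ℝ) (k : ℕ) (hk : k ∈ Finset.Icc 1 N) :
    (2 : ℝ) ^ (-(k : ℤ)) * phi N b k x y ≤ maxPhi N b N x y :=
  le_ciSup (f := fun j : Finset.Icc 1 N => (2 : ℝ) ^ (-((j : ℕ) : ℤ)) * phi N b (j : ℕ) x y)
    (Set.Finite.bddAbove (Set.finite_range _)) (⟨k, hk⟩ : Finset.Icc 1 N)

lemma dist_pt (a b c d : ℝ) : dist (pt a b) (pt c d) = Real.sqrt ((a-c)^2 + (b-d)^2) := by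
  rw [EuclideanSpace.dist_eq]
  simp [pt, Fin.sum_univ_two, Real.dist_eq, sq_abs]

/-- For all sufficiently large `N`, all `b ∈ {0,1}^N`, and all `(x,y) ∈ ℝ²`,
`Ṽ_b(x,y) ≥ 2^{4N} · max(0, dist((x,y), Z̃_b) − 1)`. -/
theorem stmt_3 :
    ∃ N₀ : ℕ, ∀ N : ℕ, N₀ ≤ N → ∀ b : ℕ → Bool, ∀ x y : ℝ,
      2 ^ (4 * N) * max 0 (Metric.infDist (pt x y) (Zsector N b) - 1) ≤ Vt N b x y := by
  refine ⟨2, fun N hN b x y => ?_⟩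
  have hN1 : 1 ≤ N := by omega
  set D := Metric.infDist (pt x y) (Zsector N b) with hD
  have hD0 : 0 ≤ D := Metric.infDist_nonneg
  set β := bitsVal b N with hβ
  have h2Npos : (0:ℝ) < 2 ^ (-(N:ℤ)) := by positivity
  rw [Vt]
  rcases le_or_gt 0 x with hx | hx
  · -- x ≥ 0 : use k = N
    set c := (2:ℝ) ^ (-(N:ℤ)) * x with hc
    have hc0 : 0 ≤ c := by positivity
    set δ := y - β * x with hδ
    set t := max (-c) (min c δ) with ht
    have htc : -c ≤ t ∧ t ≤ c :=
      ⟨le_max_left _ _, max_le (by linarith) (min_le_left _ _)⟩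
    have hmem : pt x (β * x + t) ∈ Zsector N b := by
      rcases hx.eq_or_lt with hx0 | hx0
      · refine ⟨0, β, le_refl 0, by linarith, by linarith, ?_⟩
        have hc0' : c = 0 := by rw [hc, ← hx0]; ring
        have ht0 : t = 0 := by
          rw [ht, hc0']
          rcases le_total δ 0 with h | h
          · simp [min_eq_right h]; linarith
          · simp [min_eq_left h]
        rw [← hx0, ht0]; norm_num
      · refine ⟨x, β + t / x, hx, ?_, ?_, ?_⟩
        · have : -(2:ℝ)^(-(N:ℤ)) ≤ t / x := by
            rw [le_div_iff₀ hx0]; rw [hc] at htc; nlinarith [htc.1]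
          linarith
        · have : t / x ≤ (2:ℝ)^(-(N:ℤ)) := by
            rw [div_le_iff₀ hx0]; rw [hc] at htc; nlinarith [htc.2]
          linarith
        · have : (β + t / x) * x = β * x + t := by
            field_simp
          rw [this]
    have hdist : D ≤ |δ - t| := by
      have hle : Metric.infDist (pt x y) (Zsector N b) ≤ dist (pt x y) (pt x (β*x+t)) :=
        Metric.infDist_le_dist_of_mem hmem
      rw [dist_pt] at hle
      calc D ≤ Real.sqrt ((x - x)^2 + (y - (β*x + t))^2) := hle
        _ = |δ - t| := by
            rw [hδ]; rw [show (x-x)^2 + (y - (β*x+t))^2 = (y - β*x - t)^2 by ring]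
            rw [Real.sqrt_sq_eq_abs]
    have h1 : |δ - t| ≤ max 0 (|δ| - c) := by
      rcases le_total δ c with h | h
      · rcases le_total (-c) δ with h' | h'
        · have : t = δ := by rw [ht, min_eq_right h, max_eq_right h']
          rw [this]; simp
        · have : t = -c := by
            rw [ht, min_eq_right h, max_eq_left h']
          rw [this]
          have : |δ - -c| = -δ - c := by rw [abs_of_nonpos (by linarith)]; ring
          rw [this, abs_of_nonpos (by linarith)]
          exact le_max_right _ _ |>.trans' (by linarith)
      · have htEq : t = c := by
          rw [ht, min_eq_left h, max_eq_right (by linarith)]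
        have hδ0 : (0:ℝ) ≤ δ := le_trans hc0 h
        rw [htEq, abs_of_nonneg (show (0:ℝ) ≤ δ - c by linarith), abs_of_nonneg hδ0]
        exact le_max_right _ _
    -- φ_N bounds
    have heps : (2:ℝ) ^ (-(3 * (N:ℤ) - N)) ≤ 1 := by
      apply zpow_le_one_of_nonpos₀ (by norm_num)
      omega
    have hMφ : max 0 (D - 1) ≤ phi N b N x y := by
      apply max_le (phi_nonneg N b N x y)
      rcases le_total (|δ| - c) 0 with h | h
      · have : D ≤ 0 := hdist.trans (h1.trans (by simp [h]))
        linarith [phi_nonneg N b N x y]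
      · have h2 : D ≤ |δ| - c := hdist.trans (h1.trans (by simp [h]))
        have := phi_ge N b N x y
        rw [← hβ, ← hδ, ← hc] at this
        linarith
    have hsup := maxPhi_ge N b x y N (Finset.mem_Icc.mpr ⟨hN1, le_refl N⟩)
    have hfac : (2:ℝ) ^ (4*N) ≤ 2 ^ (7*N) * 2 ^ (-(N:ℤ)) := by
      rw [show (2:ℝ)^(7*N) * 2^(-(N:ℤ)) = 2^((6*N:ℤ)) by
        rw [← zpow_natCast (2:ℝ) (7*N), ← zpow_add₀ (by norm_num : (2:ℝ) ≠ 0)]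
        congr 1; push_cast; ring]
      rw [← zpow_natCast (2:ℝ) (4*N)]
      exact zpow_le_zpow_right₀ (by norm_num) (by push_cast; omega)
    calc (2:ℝ) ^ (4*N) * max 0 (D - 1)
        ≤ 2 ^ (4*N) * phi N b N x y := by
          apply mul_le_mul_of_nonneg_left hMφ (by positivity)
      _ ≤ (2 ^ (7*N) * 2 ^ (-(N:ℤ))) * phi N b N x y := by
          apply mul_le_mul_of_nonneg_right hfac (phi_nonneg N b N x y)
      _ = 2 ^ (7*N) * (2 ^ (-(N:ℤ)) * phi N b N x y) := by ring
      _ ≤ 2 ^ (7*N) * maxPhi N b N x y := by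
          apply mul_le_mul_of_nonneg_left hsup (by positivity)
  · -- x < 0 : use k = 1
    have hmem0 : pt 0 0 ∈ Zsector N b :=
      ⟨0, β, le_refl 0, by linarith, by linarith, by norm_num⟩
    have hdist : D ≤ |x| + |y| := by
      have hle : Metric.infDist (pt x y) (Zsector N b) ≤ dist (pt x y) (pt 0 0) :=
        Metric.infDist_le_dist_of_mem hmem0
      rw [dist_pt] at hle
      refine hle.trans ?_
      rw [show (x-0)^2 + (y-0)^2 = x^2 + y^2 by ring]
      have h2 : Real.sqrt (x^2+y^2) ≤ Real.sqrt ((|x|+|y|)^2) := by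
        apply Real.sqrt_le_sqrt
        nlinarith [abs_nonneg x, abs_nonneg y, sq_abs x, sq_abs y, abs_mul_abs_self x]
      rwa [Real.sqrt_sq (by positivity)] at h2
    have hβ1 : 0 ≤ bitsVal b 1 ∧ bitsVal b 1 ≤ 1/8 := by
      rw [bitsVal, Finset.sum_range_one]
      rcases Bool.dichotomy (b 0) with h | h <;> rw [h] <;> norm_num
    have heps : (2:ℝ) ^ (-(3 * (N:ℤ) - 1)) ≤ 1/32 := by
      have : (2:ℝ) ^ (-(3 * (N:ℤ) - 1)) ≤ 2 ^ (-5:ℤ) :=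
        zpow_le_zpow_right₀ (by norm_num) (by omega)
      rw [show ((2:ℝ)^(-5:ℤ)) = 1/32 by norm_num] at this
      exact this
    have habs : |y| - (1/8) * |x| ≤ |y - bitsVal b 1 * x| := by
      have h1 : |y| - |bitsVal b 1 * x| ≤ |y - bitsVal b 1 * x| :=
        abs_sub_abs_le_abs_sub _ _
      have h2 : |bitsVal b 1 * x| ≤ (1/8) * |x| := by
        rw [abs_mul]
        apply mul_le_mul_of_nonneg_right _ (abs_nonneg x)
        rw [abs_of_nonneg hβ1.1]; exact hβ1.2
      linarith
    have hφ1 : |y| + (3/8) * |x| - 1/32 ≤ phi N b 1 x y := by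
      have := phi_ge N b 1 x y
      have hxabs : (2:ℝ) ^ (-(1:ℕ):ℤ) * x = -((1/2) * |x|) := by
        rw [abs_of_neg hx]; norm_num
      rw [hxabs] at this
      push_cast at this heps ⊢
      linarith
    have hMφ : max 0 (D - 1) ≤ 4 * phi N b 1 x y := by
      apply max_le (by have := phi_nonneg N b 1 x y; linarith)
      have h4 : |x| + |y| - 1 ≤ 4 * (|y| + (3/8) * |x| - 1/32) := by
        nlinarith [abs_nonneg x, abs_nonneg y]
      linarith
    have hsup := maxPhi_ge N b x y 1 (Finset.mem_Icc.mpr ⟨le_refl 1, hN1⟩)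
    have hfac : (2:ℝ) ^ (4*N) * 4 ≤ 2 ^ (7*N) * 2 ^ (-(1:ℕ):ℤ) := by
      rw [show (2:ℝ)^(7*N) * 2^(-(1:ℕ):ℤ) = 2^((7*N-1:ℤ)) by
        rw [← zpow_natCast (2:ℝ) (7*N), ← zpow_add₀ (by norm_num : (2:ℝ) ≠ 0)]
        first
          | (congr 1; push_cast; ring)
          | congr 1]
      rw [show (2:ℝ)^(4*N) * 4 = 2^((4*N+2:ℤ)) by
        rw [show (4:ℝ) = 2^(2:ℤ) by norm_num, ← zpow_natCast (2:ℝ) (4*N),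
          ← zpow_add₀ (by norm_num : (2:ℝ) ≠ 0)]
        first
          | (congr 1; push_cast; ring)
          | congr 1]
      exact zpow_le_zpow_right₀ (by norm_num) (by omega)
    calc (2:ℝ) ^ (4*N) * max 0 (D - 1)
        ≤ 2 ^ (4*N) * (4 * phi N b 1 x y) := by
          apply mul_le_mul_of_nonneg_left hMφ (by positivity)
      _ = (2 ^ (4*N) * 4) * phi N b 1 x y := by ring
      _ ≤ (2 ^ (7*N) * 2 ^ (-(1:ℕ):ℤ)) * phi N b 1 x y := by
          apply mul_le_mul_of_nonneg_right hfac (phi_nonneg N b 1 x y)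
      _ = 2 ^ (7*N) * (2 ^ (-(1:ℕ):ℤ) * phi N b 1 x y) := by ring
      _ ≤ 2 ^ (7*N) * maxPhi N b N x y := by
          apply mul_le_mul_of_nonneg_left hsup (by positivity)
end

section
/- For every integer N ≥ 1, every binary string b ∈ {0,1}^N, every 1 ≤ ℓ ≤ N, and every (x,y) ∈ S_ℓ(b), one has max_{k=1,…,N} 2^{-k} φ_{k,b}(x,y) = max_{k=1,…,ℓ} 2^{-k} φ_{k,b}(x,y). -/
open scoped BigOperators

lemma bitsVal_mono (b : ℕ → Bool) {l k : ℕ} (h : l ≤ k) : bitsVal b l ≤ bitsVal b k := by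
  apply Finset.sum_le_sum_of_subset_of_nonneg (Finset.range_subset_range.2 h)
  intro i _ _
  positivity

lemma bitsVal_diff (b : ℕ → Bool) {l k : ℕ} (h : l ≤ k) :
    bitsVal b k - bitsVal b l ≤ (2:ℝ) ^ (-(l:ℤ)-2) - (2:ℝ) ^ (-(k:ℤ)-2) := by
  induction k, h using Nat.le_induction with
  | base => simp
  | succ k hk ih =>
    have hstep : bitsVal b (k+1) = bitsVal b k
        + (if b k then (1 : ℝ) else 0) * (2 : ℝ) ^ (-((k : ℤ) + 3)) := by
      rw [bitsVal, Finset.sum_range_succ]; rfl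
    have hterm : (if b k then (1 : ℝ) else 0) * (2 : ℝ) ^ (-((k : ℤ) + 3))
        ≤ (2:ℝ) ^ (-(k:ℤ)-2) - (2:ℝ) ^ (-((k+1:ℕ):ℤ)-2) := by
      have h1 : (-((k+1:ℕ):ℤ)-2) = (-((k : ℤ) + 3)) := by push_cast; ring
      have h2 : (2:ℝ) ^ (-(k:ℤ)-2) = 2 * (2:ℝ) ^ (-((k : ℤ) + 3)) := by
        have : (-(k:ℤ)-2) = 1 + (-((k : ℤ) + 3)) := by ring
        rw [this, zpow_add₀ (by norm_num : (2:ℝ) ≠ 0)]; norm_num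
      rw [h1, h2]
      have : (0:ℝ) < (2:ℝ) ^ (-((k : ℤ) + 3)) := by positivity
      split <;> nlinarith
    linarith [hstep ▸ (by linarith : bitsVal b k + (if b k then (1 : ℝ) else 0) * (2 : ℝ) ^ (-((k : ℤ) + 3)) - bitsVal b l ≤ ((2:ℝ) ^ (-(l:ℤ)-2) - (2:ℝ) ^ (-(k:ℤ)-2)) + (if b k then (1 : ℝ) else 0) * (2 : ℝ) ^ (-((k : ℤ) + 3)))]

set_option maxHeartbeats 2000000 in
lemma key (N : ℕ) (b : ℕ → Bool) (l k : ℕ) (hl1 : 1 ≤ l) (hk : l < k) (x y : ℝ)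
    (hS : x < (1 / 4) * (2 : ℝ) ^ (-(3 * (N : ℤ))) ∨
      100 * (2 : ℝ) ^ (-(l : ℤ)) * x ≤ |y - bitsVal b l * x|) :
    (2:ℝ) ^ (-(k:ℤ)) * phi N b k x y ≤ (2:ℝ) ^ (-(l:ℤ)) * phi N b l x y := by
  have h2 : (2:ℝ) ≠ 0 := by norm_num
  set u : ℝ := (2:ℝ) ^ (-(l:ℤ)) with hu_def
  set v : ℝ := (2:ℝ) ^ (-(k:ℤ)) with hv_def
  set e : ℝ := (2:ℝ) ^ ((l:ℤ) - 3*N) with he_def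
  set f : ℝ := (2:ℝ) ^ ((k:ℤ) - 3*N) with hf_def
  set c : ℝ := (2:ℝ) ^ ((k:ℤ) - l) with hc_def
  have hu : 0 < u := by positivity
  have hv : 0 < v := by positivity
  have he : 0 < e := by positivity
  have hf : 0 < f := by positivity
  have hcpos : 0 < c := by positivity
  have hcv : c * v = u := by rw [hc_def, hv_def, hu_def, ← zpow_add₀ h2]; ring_nf
  have hce : c * e = f := by rw [hc_def, he_def, hf_def, ← zpow_add₀ h2]; ring_nf
  have hc2 : (2:ℝ) ≤ c := by
    have : (2:ℝ) ^ (1:ℤ) ≤ (2:ℝ) ^ ((k:ℤ) - l) := by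
      apply zpow_le_zpow_right₀ (by norm_num) (by omega)
    simpa using this
  have hu2 : u ≤ 1/2 := by
    have : (2:ℝ) ^ (-(l:ℤ)) ≤ (2:ℝ) ^ (-1:ℤ) := by
      apply zpow_le_zpow_right₀ (by norm_num) (by omega)
    simpa [hu_def] using this
  set D : ℝ := |y - bitsVal b l * x| with hD_def
  have hD : 0 ≤ D := abs_nonneg _
  set δ : ℝ := bitsVal b k - bitsVal b l with hδ_def
  have hδ0 : 0 ≤ δ := by
    have := bitsVal_mono b hk.le; simp [hδ_def]; linarith
  have hδ : δ ≤ u / 4 := by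
    have h1 := bitsVal_diff b hk.le
    have h3 : (0:ℝ) < (2:ℝ) ^ (-(k:ℤ)-2) := by positivity
    have h4 : (2:ℝ) ^ (-(l:ℤ)-2) = u / 4 := by
      rw [hu_def, show (-(l:ℤ)-2) = (-(l:ℤ)) + (-2) by ring, zpow_add₀ h2]
      norm_num
      ring
    rw [hδ_def]; linarith [h4 ▸ h1]
  have htri : |y - bitsVal b k * x| ≤ D + δ * |x| := by
    have heq : y - bitsVal b k * x = (y - bitsVal b l * x) - δ * x := by
      rw [hδ_def]; ring
    rw [heq]
    calc |(y - bitsVal b l * x) - δ * x| ≤ |y - bitsVal b l * x| + |δ * x| := abs_sub _ _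
      _ = D + δ * |x| := by rw [abs_mul, abs_of_nonneg hδ0]
  -- rewrite phi exponents
  have hphik : phi N b k x y = max 0 (|y - bitsVal b k * x| - (v * x + f)) := by
    rw [phi, hv_def, hf_def]; norm_num
  have hphil : phi N b l x y = max 0 (D - (u * x + e)) := by
    rw [phi, hu_def, he_def, hD_def]; norm_num
  have heu : (2:ℝ) ^ (-(3 * (N:ℤ))) = e * u := by
    rw [he_def, hu_def, ← zpow_add₀ h2]; ring_nf
  rw [hphik, hphil]
  clear_value u v e f c D δ
  clear hu_def hv_def he_def hf_def hc_def hD_def hδ_def hphik hphil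
  set B : ℝ := D + δ * |x| - (v * x + f) with hB_def
  have hBM : B ≤ c * max 0 (D - (u * x + e)) := by
    rcases le_or_gt 0 (D - (u * x + e)) with hA | hA
    · rw [max_eq_right hA]
      rcases le_or_gt x 0 with hx | hx
      · rw [hB_def, abs_of_nonpos hx]
        have hcoef : 0 ≤ (c * u - v - δ) * (-x) := by
          apply mul_nonneg _ (by linarith)
          nlinarith
        nlinarith
      · rw [hB_def, abs_of_pos hx]
        rcases hS with hx1 | hx1
        · have hxe : x < e * u / 4 := by rw [heu] at hx1; linarith
          -- D ≥ u x + e, goal: (δ + cu - v)x ≤ (c-1)D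
          have hD2 : e ≤ D := by nlinarith [mul_pos hu hx]
          have huu : u * u ≤ 1/4 := by nlinarith
          have hs0 : δ + c*u - v ≤ (9/8) * (c*u) := by
            nlinarith [mul_nonneg (by linarith : (0:ℝ) ≤ c - 2) hu.le]
          have hs1 : (δ + c*u - v) * x ≤ (9/8) * (c*u) * x :=
            mul_le_mul_of_nonneg_right hs0 hx.le
          have hs2 : (9/8) * (c*u) * x ≤ (9/8) * (c*u) * (e*u/4) :=
            mul_le_mul_of_nonneg_left hxe.le (by positivity)
          have hs3 : (9/8) * (c*u) * (e*u/4) ≤ (9/128) * (c*e) := by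
            nlinarith [mul_nonneg (mul_nonneg hcpos.le he.le) (by linarith : (0:ℝ) ≤ 1/4 - u*u)]
          have hs4 : (c/2) * e ≤ (c-1) * D := by
            nlinarith [mul_le_mul_of_nonneg_left hD2 (by linarith : (0:ℝ) ≤ c - 1),
              mul_pos hcpos he]
          nlinarith [mul_pos hcpos he]
        · have hs0 : δ + c*u - v ≤ (9/8) * (c*u) := by
            nlinarith [mul_nonneg (by linarith : (0:ℝ) ≤ c - 2) hu.le]
          have hs1 : (δ + c*u - v) * x ≤ (9/8) * (c*u) * x :=
            mul_le_mul_of_nonneg_right hs0 hx.le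
          have hs3 : 50 * (c * (u*x)) ≤ (c-1) * (100 * u * x) := by
            nlinarith [mul_pos hu hx]
          have hs4 : (c-1) * (100 * u * x) ≤ (c-1) * D :=
            mul_le_mul_of_nonneg_left hx1 (by linarith)
          nlinarith [mul_pos (mul_pos hcpos hu) hx]
    · rw [max_eq_left hA.le, mul_zero]
      have hDlt : D < u * x + e := by linarith
      rcases le_or_gt x 0 with hx | hx
      · rw [hB_def, abs_of_nonpos hx]
        have hcoef : 0 ≤ (u - δ - v) * (-x) := by
          apply mul_nonneg _ (by linarith)
          nlinarith
        nlinarith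
      · rw [hB_def, abs_of_pos hx]
        have hf2e : 2 * e ≤ f := by nlinarith
        rcases hS with hx1 | hx1
        · have hxe : x < e * u / 4 := by rw [heu] at hx1; linarith
          have s1 : δ * x ≤ u/4 * x := mul_le_mul_of_nonneg_right hδ hx.le
          have s2 : u * x ≤ u * (e*u/4) := mul_le_mul_of_nonneg_left hxe.le hu.le
          have huu : u * u ≤ 1/4 := by nlinarith
          have s3 : u * (e*u/4) ≤ (1/16) * e := by
            nlinarith [mul_nonneg (by linarith : (0:ℝ) ≤ 1/4 - u*u) he.le]
          nlinarith [mul_pos hv hx]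
        · have h99 : 99 * (u * x) < e := by nlinarith
          have s1 : δ * x ≤ u/4 * x := mul_le_mul_of_nonneg_right hδ hx.le
          nlinarith [mul_pos hv hx, mul_pos hu hx]
  calc v * max 0 (|y - bitsVal b k * x| - (v * x + f))
      ≤ v * max 0 B := by
        apply mul_le_mul_of_nonneg_left _ hv.le
        exact max_le_max le_rfl (by rw [hB_def]; linarith)
    _ ≤ v * (c * max 0 (D - (u * x + e))) := by
        apply mul_le_mul_of_nonneg_left _ hv.le
        exact max_le (by positivity) hBM
    _ = u * max 0 (D - (u * x + e)) := by rw [← hcv]; ring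

/-- On the set `S_ℓ(b)`, the maximum defining `Ṽ_b` is already attained
among `k = 1, …, ℓ`:  `max_{k=1,…,N} 2^{-k} φ_{k,b}(x,y) = max_{k=1,…,ℓ} 2^{-k} φ_{k,b}(x,y)`. -/
theorem stmt_4 (N : ℕ) (hN : 1 ≤ N) (b : ℕ → Bool) (ℓ : ℕ) (hℓ1 : 1 ≤ ℓ) (hℓ2 : ℓ ≤ N)
    (x y : ℝ)
    (hS : x < (1 / 4) * (2 : ℝ) ^ (-(3 * (N : ℤ))) ∨
      100 * (2 : ℝ) ^ (-(ℓ : ℤ)) * x ≤ |y - bitsVal b ℓ * x|) :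
    maxPhi N b N x y = maxPhi N b ℓ x y := by
  have hbdd : ∀ j : ℕ, BddAbove (Set.range fun k : Finset.Icc 1 j =>
      (2 : ℝ) ^ (-((k : ℕ) : ℤ)) * phi N b (k : ℕ) x y) := fun j =>
    Set.Finite.bddAbove (Set.finite_range _)
  haveI hne1 : Nonempty (Finset.Icc 1 N) := ⟨⟨1, Finset.mem_Icc.2 ⟨le_refl 1, hN⟩⟩⟩
  haveI hne2 : Nonempty (Finset.Icc 1 ℓ) := ⟨⟨1, Finset.mem_Icc.2 ⟨le_refl 1, hℓ1⟩⟩⟩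
  apply le_antisymm
  · apply ciSup_le
    rintro ⟨k, hk⟩
    rw [Finset.mem_Icc] at hk
    rcases le_or_gt k ℓ with hkl | hkl
    · exact le_ciSup (hbdd ℓ) (⟨k, Finset.mem_Icc.2 ⟨hk.1, hkl⟩⟩ : Finset.Icc 1 ℓ)
    · calc (2 : ℝ) ^ (-((k : ℕ) : ℤ)) * phi N b k x y
          ≤ (2 : ℝ) ^ (-((ℓ : ℕ) : ℤ)) * phi N b ℓ x y := key N b ℓ k hℓ1 hkl x y hS
        _ ≤ maxPhi N b ℓ x y :=
          le_ciSup (hbdd ℓ) (⟨ℓ, Finset.mem_Icc.2 ⟨hℓ1, le_refl ℓ⟩⟩ : Finset.Icc 1 ℓ)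
  · apply ciSup_le
    rintro ⟨k, hk⟩
    rw [Finset.mem_Icc] at hk
    exact le_ciSup (hbdd N) (⟨k, Finset.mem_Icc.2 ⟨hk.1, hk.2.trans hℓ2⟩⟩ : Finset.Icc 1 N)
end

section
/- There exists an integer N₀ such that for all integers N ≥ N₀, all binary strings b ∈ {0,1}^N, and all 1 ≤ ℓ ≤ N, the following holds with δ := 2^{-5N}: if (x,y) ∈ ℝ² satisfies x < (1/8)·2^{-3N} or |y − [b]_ℓ x| > 200 · 2^{-ℓ} x, then every (x',y') ∈ ℝ² with ‖(x',y') − (x,y)‖ ≤ δ satisfies x' < (1/4)·2^{-3N} or |y' − [b]_ℓ x'| > 100 · 2^{-ℓ} x'. -/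
open scoped BigOperators

lemma coord_le_s7 (x y x' y' : ℝ) :
    |x' - x| ≤ dist (pt x' y') (pt x y) ∧ |y' - y| ≤ dist (pt x' y') (pt x y) := by
  unfold pt
  have h := EuclideanSpace.dist_eq (WithLp.toLp 2 ![x', y'] : EuclideanSpace ℝ (Fin 2)) (WithLp.toLp 2 ![x, y])
  simp only [PiLp.toLp_apply, Fin.sum_univ_two, Matrix.cons_val_zero, Matrix.cons_val_one, Matrix.head_cons,
    Real.dist_eq] at h
  constructor <;> rw [h]
  · calc |x' - x| = Real.sqrt (|x' - x| ^ 2) := (Real.sqrt_sq (abs_nonneg _)).symm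
      _ ≤ _ := Real.sqrt_le_sqrt (by nlinarith [sq_nonneg (y' - y), sq_abs (y' - y)])
  · calc |y' - y| = Real.sqrt (|y' - y| ^ 2) := (Real.sqrt_sq (abs_nonneg _)).symm
      _ ≤ _ := Real.sqrt_le_sqrt (by nlinarith [sq_nonneg (x' - x), sq_abs (x' - x)])

lemma bitsVal_le_one (b : ℕ → Bool) (k : ℕ) : bitsVal b k ≤ 1 := by
  have h1 : bitsVal b k ≤ ∑ i ∈ Finset.range k, (1/8 : ℝ) * (1/2) ^ i := by
    apply Finset.sum_le_sum
    intro i _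
    have h2 : (2 : ℝ) ^ (-((i : ℤ) + 3)) = (1/8 : ℝ) * (1/2) ^ i := by
      rw [show -((i : ℤ) + 3) = (-(i:ℤ)) + (-3) by ring, zpow_add₀ (by norm_num : (2:ℝ) ≠ 0)]
      rw [zpow_neg, zpow_natCast, ← one_div, ← one_div_pow]
      norm_num
      ring
    rw [h2]
    split <;> nlinarith [pow_pos (by norm_num : (0:ℝ) < 1/2) i]
  rw [← Finset.mul_sum] at h1
  have h2 : ∑ i ∈ Finset.range k, (1/2 : ℝ) ^ i ≤ 2 := sum_geometric_two_le k
  nlinarith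

set_option maxHeartbeats 1600000 in
/-- For all sufficiently large `N`, with `δ = 2^{-5N}`: if `(x,y)` satisfies
`x < (1/8)·2^{-3N}` or `|y − [b]_ℓ x| > 200·2^{-ℓ} x`, then every `(x',y')` with
`‖(x',y') − (x,y)‖ ≤ δ` satisfies `x' < (1/4)·2^{-3N}` or `|y' − [b]_ℓ x'| > 100·2^{-ℓ} x'`. -/
theorem stmt_7 :
    ∃ N₀ : ℕ, ∀ N : ℕ, N₀ ≤ N → ∀ b : ℕ → Bool, ∀ ℓ : ℕ, 1 ≤ ℓ → ℓ ≤ N →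
      ∀ x y : ℝ,
        (x < (1 / 8) * (2 : ℝ) ^ (-(3 * (N : ℤ))) ∨
          200 * (2 : ℝ) ^ (-(ℓ : ℤ)) * x < |y - bitsVal b ℓ * x|) →
      ∀ x' y' : ℝ, dist (pt x' y') (pt x y) ≤ (2 : ℝ) ^ (-(5 * (N : ℤ))) →
        (x' < (1 / 4) * (2 : ℝ) ^ (-(3 * (N : ℤ))) ∨
          100 * (2 : ℝ) ^ (-(ℓ : ℤ)) * x' < |y' - bitsVal b ℓ * x'|) := by
  use 4
  intro N hN b ℓ hℓ1 hℓN x y hxy x' y' hdist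
  obtain ⟨hdx, hdy⟩ := coord_le_s7 x y x' y'
  set A : ℝ := (2 : ℝ) ^ (-(N : ℤ)) with hAdef
  set ρ : ℝ := (2 : ℝ) ^ (-(ℓ : ℤ)) with hρdef
  have hA0 : 0 < A := by positivity
  have hρ0 : 0 < ρ := by positivity
  have hA3 : (2 : ℝ) ^ (-(3 * (N : ℤ))) = A ^ 3 := by
    rw [hAdef, ← zpow_natCast ((2:ℝ) ^ (-(N:ℤ))) 3, ← zpow_mul]
    ring_nf
  have hA5 : (2 : ℝ) ^ (-(5 * (N : ℤ))) = A ^ 5 := by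
    rw [hAdef, ← zpow_natCast ((2:ℝ) ^ (-(N:ℤ))) 5, ← zpow_mul]
    ring_nf
  have h2N : (16 : ℝ) ≤ 2 ^ N := by
    calc (16:ℝ) = 2 ^ 4 := by norm_num
      _ ≤ 2 ^ N := pow_le_pow_right₀ one_le_two hN
  have hA16 : A ≤ 1 / 16 := by
    rw [hAdef, zpow_neg, zpow_natCast, ← one_div]
    exact le_trans (one_div_le_one_div_of_le (by norm_num) h2N) (by norm_num)
  have hAρ : A ≤ ρ := by
    rw [hAdef, hρdef]
    apply zpow_le_zpow_right₀ one_le_two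
    omega
  have hρhalf : ρ ≤ 1 / 2 := by
    rw [hρdef, show (1/2 : ℝ) = (2:ℝ) ^ (-1 : ℤ) by norm_num]
    apply zpow_le_zpow_right₀ one_le_two
    omega
  have hdx' : |x' - x| ≤ A ^ 5 := by rw [← hA5]; exact le_trans hdx hdist
  have hdy' : |y' - y| ≤ A ^ 5 := by rw [← hA5]; exact le_trans hdy hdist
  have hax1 := abs_le.mp hdx'
  have hay1 := abs_le.mp hdy'
  set β := bitsVal b ℓ with hβdef
  have hβ0 : 0 ≤ β := bitsVal_nonneg b ℓ
  have hβ1 : β ≤ 1 := bitsVal_le_one b ℓ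
  have hA2 : A ^ 2 ≤ 1 / 256 := by nlinarith
  have hA53 : A ^ 5 ≤ (1 / 8) * A ^ 3 := by nlinarith [pow_pos hA0 3]
  have hAρ5 : A ^ 5 ≤ (1 / 16) * (ρ * A ^ 3) := by
    have h1 : A ^ 5 ≤ ρ * A ^ 4 := by nlinarith [pow_pos hA0 4]
    nlinarith [mul_le_mul_of_nonneg_left hA16 (le_of_lt hρ0), pow_pos hA0 3, hρ0]
  clear_value A ρ β
  rw [hA3] at hxy ⊢
  clear hdist hdx hdy hAdef hρdef hβdef hA3 hA5 h2N
  rcases hxy with hx | hx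
  · left
    linarith [hax1.2]
  · by_cases hx' : x' < (1 / 4) * A ^ 3
    · left; exact hx'
    · right
      push_neg at hx'
      have hxlb : (1 / 8) * A ^ 3 ≤ x := by linarith [hax1.1]
      have htri : |y - β * x| ≤ |y' - β * x'| + |y - y'| + β * |x' - x| := by
        calc |y - β * x| = |(y' - β * x') + (y - y') + β * (x' - x)| := by ring_nf
          _ ≤ |(y' - β * x') + (y - y')| + |β * (x' - x)| := abs_add_le _ _
          _ ≤ |y' - β * x'| + |y - y'| + |β * (x' - x)| := by
              have := abs_add_le (y' - β * x') (y - y'); linarith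
          _ = |y' - β * x'| + |y - y'| + β * |x' - x| := by
              rw [abs_mul, abs_of_nonneg hβ0]
      have hyy : |y - y'| ≤ A ^ 5 := by rw [abs_sub_comm]; exact hdy'
      have h5 : β * |x' - x| ≤ A ^ 5 := by
        calc β * |x' - x| ≤ 1 * (A ^ 5) := mul_le_mul hβ1 hdx' (abs_nonneg _) (by norm_num)
          _ = A ^ 5 := one_mul _
      have h1 : 25 / 2 * (ρ * A ^ 3) ≤ 100 * ρ * x := by
        nlinarith [mul_le_mul_of_nonneg_left hxlb (le_of_lt hρ0)]
      have h3 : 0 < ρ * A ^ 3 := by positivity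
      have h4 : 100 * ρ * x' ≤ 100 * ρ * x + 50 * A ^ 5 := by
        nlinarith [mul_le_mul_of_nonneg_left hax1.2 (le_of_lt hρ0), pow_pos hA0 5]
      linarith [htri, hx, hyy, h1, hAρ5, h4, h5, h3]
end

section
/- Let K, N ≥ 1 be integers and let V, V' ∈ ℝ^{K×N} be real matrices such that V Vᵀ = V' (V')ᵀ. Then there exists an orthogonal matrix U ∈ ℝ^{N×N} (i.e., U Uᵀ = I_N) such that V U = V'. -/
open Matrix
-- helper: toEuclideanLin is multiplicative (as composition)
lemma toEuclideanLin_mul' {m n p : Type*} [Fintype m] [Fintype n] [Fintype p]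
    [DecidableEq n] [DecidableEq p]
    (A : Matrix m n ℝ) (B : Matrix n p ℝ) :
    Matrix.toEuclideanLin (A * B) =
      (Matrix.toEuclideanLin A).comp (Matrix.toEuclideanLin B) := by
  ext v
  simp [Matrix.toEuclideanLin_apply, Matrix.mulVec_mulVec]

/-- If `V Vᵀ = V' V'ᵀ` for `K×N` real matrices, then there is an
orthogonal `N×N` matrix `U` with `V U = V'`. -/
theorem stmt_14 (K N : ℕ) (hK : 1 ≤ K) (hN : 1 ≤ N)
    (V V' : Matrix (Fin K) (Fin N) ℝ) (h : V * Vᵀ = V' * V'ᵀ) :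
    ∃ U : Matrix (Fin N) (Fin N) ℝ, U * Uᵀ = 1 ∧ V * U = V' := by
  classical
  let g : EuclideanSpace ℝ (Fin K) →ₗ[ℝ] EuclideanSpace ℝ (Fin N) := Matrix.toEuclideanLin Vᵀ
  let f : EuclideanSpace ℝ (Fin K) →ₗ[ℝ] EuclideanSpace ℝ (Fin N) := Matrix.toEuclideanLin V'ᵀ
  have hadj_g : LinearMap.adjoint g = Matrix.toEuclideanLin V := by
    rw [show (V : Matrix (Fin K) (Fin N) ℝ) = (Vᵀ)ᴴ by ext i j; simp,
      Matrix.toEuclideanLin_conjTranspose_eq_adjoint]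
  have hadj_f : LinearMap.adjoint f = Matrix.toEuclideanLin V' := by
    rw [show (V' : Matrix (Fin K) (Fin N) ℝ) = (V'ᵀ)ᴴ by ext i j; simp,
      Matrix.toEuclideanLin_conjTranspose_eq_adjoint]
  have hcomp : (LinearMap.adjoint g).comp g = (LinearMap.adjoint f).comp f := by
    rw [hadj_g, hadj_f, ← toEuclideanLin_mul', ← toEuclideanLin_mul', h]
  have key : ∀ c, ‖f c‖ = ‖g c‖ := by
    intro c
    have h1 : (inner ℝ (f c) (f c) : ℝ) = inner ℝ (g c) (g c) := by
      rw [← LinearMap.adjoint_inner_left, ← LinearMap.adjoint_inner_left]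
      have := congrFun (congrArg DFunLike.coe hcomp) c
      simp only [LinearMap.comp_apply] at this
      rw [this]
    have h2 : ‖f c‖ ^ 2 = ‖g c‖ ^ 2 := by
      rw [← real_inner_self_eq_norm_sq, ← real_inner_self_eq_norm_sq, h1]
    exact (sq_eq_sq₀ (norm_nonneg _) (norm_nonneg _)).mp h2
  have hker : LinearMap.ker g ≤ LinearMap.ker f := by
    intro c hc
    rw [LinearMap.mem_ker] at hc ⊢
    have := key c
    rw [hc, norm_zero, norm_eq_zero] at this
    exact this
  let q : (EuclideanSpace ℝ (Fin K) ⧸ LinearMap.ker g) →ₗ[ℝ] EuclideanSpace ℝ (Fin N) :=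
    (LinearMap.ker g).liftQ f hker
  let e := g.quotKerEquivRange
  let L0 : LinearMap.range g →ₗ[ℝ] EuclideanSpace ℝ (Fin N) := q.comp e.symm.toLinearMap
  have hL0 : ∀ c : EuclideanSpace ℝ (Fin K),
      L0 ⟨g c, LinearMap.mem_range_self g c⟩ = f c := by
    intro c
    have he : e.symm ⟨g c, LinearMap.mem_range_self g c⟩ = Submodule.Quotient.mk c := by
      rw [LinearEquiv.symm_apply_eq]
      exact Subtype.ext (g.quotKerEquivRange_apply_mk c).symm
    simp only [L0, LinearMap.comp_apply, LinearEquiv.coe_toLinearMap, he]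
    exact Submodule.liftQ_apply _ f c
  have hnorm : ∀ x : LinearMap.range g, ‖L0 x‖ = ‖x‖ := by
    rintro ⟨_, c, rfl⟩
    rw [hL0 c, key c]
    rfl
  let L : LinearMap.range g →ₗᵢ[ℝ] EuclideanSpace ℝ (Fin N) := ⟨L0, hnorm⟩
  let T := L.extend
  have hT : ∀ c, T (g c) = f c := by
    intro c
    rw [← hL0 c]
    exact L.extend_apply ⟨g c, LinearMap.mem_range_self g c⟩
  let A : Matrix (Fin N) (Fin N) ℝ := Matrix.toEuclideanLin.symm T.toLinearMap
  have hA : Matrix.toEuclideanLin A = T.toLinearMap := Matrix.toEuclideanLin.apply_symm_apply _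
  have hAV : A * Vᵀ = V'ᵀ := by
    apply Matrix.toEuclideanLin.injective
    rw [toEuclideanLin_mul', hA]
    exact LinearMap.ext fun c => hT c
  have hAorth : Aᵀ * A = 1 := by
    apply Matrix.toEuclideanLin.injective
    have : Matrix.toEuclideanLin Aᵀ = LinearMap.adjoint (Matrix.toEuclideanLin A) := by
      rw [show (Aᵀ : Matrix (Fin N) (Fin N) ℝ) = Aᴴ by ext i j; simp,
        Matrix.toEuclideanLin_conjTranspose_eq_adjoint]
    rw [toEuclideanLin_mul', this, hA]
    refine LinearMap.ext fun x => ?_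
    apply ext_inner_right ℝ
    intro y
    rw [LinearMap.comp_apply, LinearMap.adjoint_inner_left]
    simp only [LinearIsometry.coe_toLinearMap, T.inner_map_map]
    simp [Matrix.toEuclideanLin_apply]
  refine ⟨Aᵀ, ?_, ?_⟩
  · rw [Matrix.transpose_transpose]; exact hAorth
  · have := congrArg Matrix.transpose hAV
    rwa [Matrix.transpose_mul, Matrix.transpose_transpose, Matrix.transpose_transpose] at this
end
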